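/- arXiv:2409.00612 — 4 statements merged into one kernel-verified Lean document; each statement's English description precedes it below -/
import Mathlib

section
/- In a flag simplicial complex, if a dwheel W is contained in the closed 1-ball B_1(v) around a vertex v and both wheels of W are full subcomplexes, then either W is contained in the link of v, or v is a vertex of W and one of the wheels of W fails to be full. Consequently, in the definition of m-location one may equivalently require only containment in a 1-ball. -/
/-- A flag simplicial complex is determined by its 1-skeleton graph `G`.
A `k`-wheel `(c; r 0, …, r (k-1))`: `r` is an (injective) cycle and `c` is adjacent
to every rim vertex. -/
def IsWheel {V : Type*} (G : SimpleGraph V) {k : ℕ} (c : V) (r : ZMod k → V) : Prop :=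
  Function.Injective r ∧ (∀ i, c ≠ r i) ∧ (∀ i, G.Adj (r i) (r (i + 1))) ∧ (∀ i, G.Adj c (r i))

/-- A wheel that is a full (induced) subcomplex: the only adjacencies among rim
vertices are the consecutive ones. -/
def IsFullWheel {V : Type*} (G : SimpleGraph V) {k : ℕ} (c : V) (r : ZMod k → V) : Prop :=
  IsWheel G c r ∧ ∀ i j, G.Adj (r i) (r j) → j = i + 1 ∨ i = j + 1

/-- `5`-largeness: no induced (full) `4`-cycle. -/
def FiveLarge {V : Type*} (G : SimpleGraph V) : Prop :=
  ∀ a b c d : V, a ≠ c → b ≠ d → G.Adj a b → G.Adj b c → G.Adj c d → G.Adj d a →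
    G.Adj a c ∨ G.Adj b d

/-- Local `5`-largeness: no vertex link contains an induced `4`-cycle. -/
def LocallyFiveLarge {V : Type*} (G : SimpleGraph V) : Prop :=
  ∀ z a b c d : V, G.Adj z a → G.Adj z b → G.Adj z c → G.Adj z d →
    a ≠ c → b ≠ d → G.Adj a b → G.Adj b c → G.Adj c d → G.Adj d a →
    G.Adj a c ∨ G.Adj b d

/-- The extended `5`-wheel condition: every extended `5`-wheel `(c; r; a)` is
contained in the link of some vertex `z`. -/
def ExtFiveWheelCond {V : Type*} (G : SimpleGraph V) : Prop :=
  ∀ (c a : V) (r : ZMod 5 → V), IsWheel G c r →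
    G.Adj a (r 0) → G.Adj a (r 1) → a ≠ c → ¬ G.Adj a c →
    (∀ i : ZMod 5, i ≠ 0 → i ≠ 1 → a ≠ r i ∧ ¬ G.Adj a (r i)) →
    ∃ z : V, G.Adj z c ∧ G.Adj z a ∧ ∀ i, G.Adj z (r i)

/-- `m`-location.  A `(k,l)`-dwheel is the union of wheels
`W₁ = (w l; v 0, …, v (k-1))` and `W₂ = (v 1; w 0, …, w (l-1))` with
`v 2 = w (l-2)` (shared rim vertex) and either `v 0 = w 0` (planar, boundary
length `k+l-4`) or `v 0 ~ w 0` (nonplanar, boundary length `k+l-3`).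
Here the center of `W₁` is `w (-1)` and the center of `W₂` is `v 1`.
If both wheels are full and the boundary length is at most `m`, the dwheel is
contained in the link of some vertex. -/
def MLocated {V : Type*} (G : SimpleGraph V) (m : ℕ) : Prop :=
  ∀ (k l : ℕ), 4 ≤ k → 4 ≤ l → ∀ (v : ZMod k → V) (w : ZMod l → V),
    IsFullWheel G (w (-1)) v → IsFullWheel G (v 1) w → v 2 = w (-2) →
    ((v 0 = w 0 ∧ k + l - 4 ≤ m) ∨ (v 0 ≠ w 0 ∧ G.Adj (v 0) (w 0) ∧ k + l - 3 ≤ m)) →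
    ∃ z : V, (∀ i, G.Adj z (v i)) ∧ (∀ i, G.Adj z (w i))

/-!
A rim vertex `r i` of a full wheel with at least four spokes is neither equal nor adjacent to
`r (i + 2)`, so a vertex in the closed ball of a full rim cannot lie on that rim and is therefore
adjacent to all of it. Applied to both wheels of the dwheel, this puts the dwheel in the link.
-/

theorem ZMod.natCast_ne_zero_of_pos_of_lt {n k : ℕ} (hn : 0 < n) (hnk : n < k) :
    (n : ZMod k) ≠ 0 := by
  rw [Ne, ZMod.natCast_eq_zero_iff]
  exact Nat.not_dvd_of_pos_of_lt hn hnk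

namespace IsFullWheel

variable {V : Type*} {G : SimpleGraph V} {k : ℕ} {c z : V} {r : ZMod k → V}

theorem ne_rim_of_forall_eq_or_adj (hk : 4 ≤ k) (hF : IsFullWheel G c r)
    (hball : ∀ j, z = r j ∨ G.Adj z (r j)) (i : ZMod k) : z ≠ r i := by
  rintro rfl
  obtain ⟨⟨hinj, -, -, -⟩, hfull⟩ := hF
  have h1 : (1 : ZMod k) ≠ 0 := by
    simpa using ZMod.natCast_ne_zero_of_pos_of_lt (n := 1) (by lia) (by lia)
  have h2 : (2 : ZMod k) ≠ 0 := by
    simpa using ZMod.natCast_ne_zero_of_pos_of_lt (n := 2) (by lia) (by lia)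
  have h3 : (3 : ZMod k) ≠ 0 := by
    simpa using ZMod.natCast_ne_zero_of_pos_of_lt (n := 3) (by lia) (by lia)
  rcases hball (i + 2) with heq | hadj
  · exact h2 (left_eq_add.mp (hinj heq))
  · rcases hfull i (i + 2) hadj with h | h
    · exact h1 (by linear_combination h)
    · exact h3 (by linear_combination -h)

theorem adj_rim_of_forall_eq_or_adj (hk : 4 ≤ k) (hF : IsFullWheel G c r)
    (hball : ∀ j, z = r j ∨ G.Adj z (r j)) (i : ZMod k) : G.Adj z (r i) :=
  (hball i).resolve_left (hF.ne_rim_of_forall_eq_or_adj hk hball i)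

end IsFullWheel

theorem dwheel_in_ball_iff_link_general {V : Type*} (G : SimpleGraph V)
    (k l : ℕ) (hk : 4 ≤ k) (hl : 4 ≤ l) (v : ZMod k → V) (w : ZMod l → V)
    (hW1 : IsFullWheel G (w (-1)) v) (hW2 : IsFullWheel G (v 1) w)
    (z : V)
    (hball : (∀ i, z = v i ∨ G.Adj z (v i)) ∧ (∀ i, z = w i ∨ G.Adj z (w i))) :
    ((∀ i, G.Adj z (v i)) ∧ (∀ i, G.Adj z (w i))) ∨
      (((∃ i, z = v i) ∨ (∃ i, z = w i)) ∧
        (¬ IsFullWheel G (w (-1)) v ∨ ¬ IsFullWheel G (v 1) w)) :=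
  Or.inl ⟨hW1.adj_rim_of_forall_eq_or_adj hk hball.1, hW2.adj_rim_of_forall_eq_or_adj hl hball.2⟩

/-- If a dwheel `W` (with both wheels full) is contained in the closed
1-ball around a vertex `z`, then either `W` is contained in the link of `z`, or `z`
is a vertex of `W` and one of the wheels of `W` fails to be full. -/
theorem dwheel_in_ball_iff_link {V : Type*} (G : SimpleGraph V)
    (k l : ℕ) (hk : 4 ≤ k) (hl : 4 ≤ l) (v : ZMod k → V) (w : ZMod l → V)
    (hW1 : IsFullWheel G (w (-1)) v) (hW2 : IsFullWheel G (v 1) w)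
    (hshare : v 2 = w (-2))
    (hconn : v 0 = w 0 ∨ (v 0 ≠ w 0 ∧ G.Adj (v 0) (w 0)))
    (z : V)
    (hball : (∀ i, z = v i ∨ G.Adj z (v i)) ∧ (∀ i, z = w i ∨ G.Adj z (w i))) :
    ((∀ i, G.Adj z (v i)) ∧ (∀ i, G.Adj z (w i))) ∨
      (((∃ i, z = v i) ∨ (∃ i, z = w i)) ∧
        (¬ IsFullWheel G (w (-1)) v ∨ ¬ IsFullWheel G (v 1) w)) :=
  dwheel_in_ball_iff_link_general G k l hk hl v w hW1 hW2 z hball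
end

section
/- Let X be a 5-large flag simplicial complex satisfying the extended-5-wheel condition (locally weakly systolic). If W = W_1 ∪ W_2 is a planar (5,5)-dwheel in X with both wheels W_1 and W_2 full subcomplexes, then W is contained in the 1-ball centered at some vertex of X. -/
/-!
Apply the extended 5-wheel condition to `(w₄; v₀, …, v₄; w₁)`: the vertex `w₁` spans a triangle
with `v₀ = w₀` and `v₁`, and it misses `w₄`, `v₂ = w₃`, `v₃`, `v₄`, the last two because a
common neighbour of `w₁` and `v₃` (or `v₄`) would close an induced 4-cycle through `v₁` and `w₄`.
The resulting vertex `z` is adjacent to every vertex of the dwheel except possibly `w₂`, and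
5-largeness applied to the 4-cycle `z w₁ w₂ w₃` gives `z = w₂` or `z ~ w₂`.
-/

section

variable {V : Type*} {G : SimpleGraph V}

theorem FiveLarge.eq_or_adj_of_square (h5 : FiveLarge G) {a b c d : V}
    (hab : G.Adj a b) (hbc : G.Adj b c) (hcd : G.Adj c d) (hda : G.Adj d a)
    (hac : a ≠ c) (hnac : ¬ G.Adj a c) : b = d ∨ G.Adj b d := by
  by_cases hbd : b = d
  · exact Or.inl hbd
  · exact Or.inr ((h5 a b c d hac hbd hab hbc hcd hda).resolve_left hnac)

theorem IsFullWheel.injective {k : ℕ} {c : V} {r : ZMod k → V} (hW : IsFullWheel G c r) :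
    Function.Injective r :=
  hW.1.1

theorem IsFullWheel.adj_succ {k : ℕ} {c : V} {r : ZMod k → V} (hW : IsFullWheel G c r)
    (i : ZMod k) : G.Adj (r i) (r (i + 1)) :=
  hW.1.2.2.1 i

theorem IsFullWheel.center_adj {k : ℕ} {c : V} {r : ZMod k → V} (hW : IsFullWheel G c r)
    (i : ZMod k) : G.Adj c (r i) :=
  hW.1.2.2.2 i

theorem IsFullWheel.not_adj {k : ℕ} {c : V} {r : ZMod k → V} (hW : IsFullWheel G c r)
    {i j : ZMod k} (hij : j ≠ i + 1) (hji : i ≠ j + 1) : ¬ G.Adj (r i) (r j) :=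
  fun h => (hW.2 i j h).elim hij hji

theorem IsFullWheel.ne_and_not_adj_of_adj (h5 : FiveLarge G) {k : ℕ} {c a : V}
    {r : ZMod k → V} (hW : IsFullWheel G c r) {i j : ZMod k} (ha : G.Adj a (r j))
    (hac : a ≠ c) (hnac : ¬ G.Adj a c) (hne : j ≠ i) (hij : i ≠ j + 1) (hji : j ≠ i + 1) :
    a ≠ r i ∧ ¬ G.Adj a (r i) := by
  have hrim : ¬ G.Adj (r i) (r j) := hW.not_adj hji hij
  refine ⟨G.ne_of_adj_of_not_adj ha hrim, fun hai => ?_⟩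
  rcases h5.eq_or_adj_of_square hai.symm ha (hW.center_adj j).symm (hW.center_adj i)
    (hW.injective.ne hne.symm) hrim with h | h
  · exact hac h
  · exact hnac h

theorem ExtFiveWheelCond.exists_adj_of_planar_dwheel (h5 : FiveLarge G)
    (hext : ExtFiveWheelCond G) {v w : ZMod 5 → V}
    (hW1 : IsFullWheel G (w 4) v) (hW2 : IsFullWheel G (v 1) w)
    (hshare : v 2 = w 3) (hplanar : v 0 = w 0) :
    ∃ z, G.Adj z (w 4) ∧ G.Adj z (w 1) ∧ ∀ i, G.Adj z (v i) := by
  have hw1v1 : G.Adj (w 1) (v 1) := (hW2.center_adj 1).symm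
  have hw1w4 : ¬ G.Adj (w 1) (w 4) := hW2.not_adj (by decide) (by decide)
  have hw1w4_ne : w 1 ≠ w 4 := hW2.injective.ne (by decide)
  refine hext (w 4) (w 1) v hW1.1 (hplanar ▸ (hW2.adj_succ 0).symm) hw1v1 hw1w4_ne hw1w4 ?_
  intro i hi0 hi1
  obtain rfl | rfl | rfl : i = 2 ∨ i = 3 ∨ i = 4 := by revert i; decide
  · rw [hshare]
    exact ⟨hW2.injective.ne (by decide), hW2.not_adj (by decide) (by decide)⟩
  all_goals
    exact hW1.ne_and_not_adj_of_adj h5 hw1v1 hw1w4_ne hw1w4 (by decide) (by decide) (by decide)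

end

/-- In a 5-large flag complex satisfying the extended-5-wheel condition,
every planar (5,5)-dwheel with full wheels lies in a 1-ball. -/
theorem planar_five_five_dwheel_in_ball {V : Type*} (G : SimpleGraph V)
    (h5 : FiveLarge G) (hext : ExtFiveWheelCond G)
    (v w : ZMod 5 → V)
    (hW1 : IsFullWheel G (w (-1)) v) (hW2 : IsFullWheel G (v 1) w)
    (hshare : v 2 = w (-2)) (hplanar : v 0 = w 0) :
    ∃ z : V, (∀ i, z = v i ∨ G.Adj z (v i)) ∧ (∀ i, z = w i ∨ G.Adj z (w i)) := by
  change IsFullWheel G (w 4) v at hW1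
  change v 2 = w 3 at hshare
  obtain ⟨z, hzw4, hzw1, hzv⟩ := hext.exists_adj_of_planar_dwheel h5 hW1 hW2 hshare hplanar
  have hzw3 : G.Adj z (w 3) := hshare ▸ hzv 2
  have hzw2 : z = w 2 ∨ G.Adj z (w 2) :=
    h5.eq_or_adj_of_square hzw1.symm hzw3 (hW2.adj_succ 2).symm (hW2.adj_succ 1).symm
      (hW2.injective.ne (by decide)) (hW2.not_adj (by decide) (by decide))
  refine ⟨z, fun i => Or.inr (hzv i), fun i => ?_⟩
  obtain rfl | rfl | rfl | rfl | rfl : i = 0 ∨ i = 1 ∨ i = 2 ∨ i = 3 ∨ i = 4 := by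
    revert i; decide
  · exact Or.inr (hplanar ▸ hzv 0)
  · exact Or.inr hzw1
  · exact hzw2
  · exact Or.inr hzw3
  · exact Or.inr hzw4
end

section
/- Let X be a 5-large flag simplicial complex satisfying the extended-5-wheel condition. If W = W_1 ∪ W_2 is a nonplanar (5,5)-dwheel in X (i.e., v_1 ~ w_1 rather than v_1 = w_1) with both wheels full subcomplexes, then W is contained in the 1-ball centered at some vertex of X. -/
/-!
Both extended 5-wheels of the dwheel, `(w 4; v; w 2)` and `(v 1; w; v 3)`, lie in vertex links:
this gives `z` adjacent to `w 4`, `w 2` and every `v i`, and `z'` adjacent to `v 1`, `v 3` and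
every `w i`. If `z ≠ z'`, 5-largeness on the 4-cycle `z v₁ z' v₃` gives `z ~ z'`, and then on the
4-cycle `z z' w₀ v₀` it gives `z ~ w 0` or `z' ~ v 0`. In the first case the 4-cycle `z w₀ w₁ w₂`
gives `z ~ w 1`, so `z` is adjacent to the whole dwheel; the second case is its mirror image under
`v i ↦ w (-i)`, `w i ↦ v (-i)`, which is a symmetry of nonplanar `(5,5)`-dwheels.
-/

section Dwheel

variable {V : Type*} {G : SimpleGraph V}

theorem FiveLarge.adj_of_cycle (h5 : FiveLarge G) {a b c d : V} (hac : a ≠ c) (hbd : b ≠ d)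
    (hab : G.Adj a b) (hbc : G.Adj b c) (hcd : G.Adj c d) (hda : G.Adj d a)
    (hnbd : ¬G.Adj b d) : G.Adj a c :=
  (h5 a b c d hac hbd hab hbc hcd hda).resolve_right hnbd

namespace IsWheel

variable {k : ℕ} {c : V} {r : ZMod k → V}

theorem comp_add_right (h : IsWheel G c r) (t : ZMod k) : IsWheel G c (fun i => r (i + t)) := by
  obtain ⟨hinj, hc, hcyc, hadj⟩ := h
  refine ⟨fun i j hij => add_right_cancel (hinj hij), fun i => hc _, fun i => ?_, fun i => hadj _⟩
  simpa only [add_right_comm] using hcyc (i + t)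

theorem comp_neg (h : IsWheel G c r) : IsWheel G c (fun i => r (-i)) := by
  obtain ⟨hinj, hc, hcyc, hadj⟩ := h
  refine ⟨fun i j hij => neg_inj.mp (hinj hij), fun i => hc _, fun i => ?_, fun i => hadj _⟩
  simpa only [neg_add', sub_add_cancel] using (hcyc (-i - 1)).symm

end IsWheel

namespace IsFullWheel

variable {k : ℕ} {c : V} {r : ZMod k → V}

theorem comp_neg (h : IsFullWheel G c r) : IsFullWheel G c (fun i => r (-i)) := by
  refine ⟨h.1.comp_neg, fun i j hij => ?_⟩
  rcases h.2 _ _ hij with h' | h'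
  · exact .inr (by linear_combination h')
  · exact .inl (by linear_combination h')

theorem center_adj_s2 (h : IsFullWheel G c r) (i : ZMod k) : G.Adj c (r i) :=
  h.1.2.2.2 i

theorem rim_ne (h : IsFullWheel G c r) (i j : ZMod k) (hij : i ≠ j := by decide) : r i ≠ r j :=
  h.1.1.ne hij

theorem rim_adj (h : IsFullWheel G c r) (i j : ZMod k) (hij : j = i + 1 := by decide) :
    G.Adj (r i) (r j) :=
  hij ▸ h.1.2.2.1 i

theorem rim_not_adj (h : IsFullWheel G c r) (i j : ZMod k)
    (hij : j ≠ i + 1 ∧ i ≠ j + 1 := by decide) : ¬G.Adj (r i) (r j) :=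
  fun hadj => (h.2 i j hadj).elim hij.1 hij.2

end IsFullWheel

theorem ExtFiveWheelCond.exists_adj_of_adj_rim_succ (hext : ExtFiveWheelCond G) {c a : V}
    {r : ZMod 5 → V} (hW : IsWheel G c r) (t : ZMod 5) (ht : G.Adj a (r t))
    (ht' : G.Adj a (r (t + 1))) (hac : ¬G.Adj a c)
    (hfar : ∀ i, i ≠ t → i ≠ t + 1 → ¬G.Adj a (r i)) :
    ∃ z, G.Adj z c ∧ G.Adj z a ∧ ∀ i, G.Adj z (r i) := by
  have hcenter := hW.2.2.2
  have hne : a ≠ c := by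
    rintro rfl
    refine hfar (t + 2) ?_ ?_ (hcenter _) <;> simp <;> decide
  obtain ⟨z, hzc, hza, hz⟩ := hext c a (fun i => r (i + t)) (hW.comp_add_right t)
    (by simpa using ht) (by simpa [add_comm] using ht') hne hac fun i h0 h1 =>
      ⟨fun h => hac (h ▸ (hcenter _).symm),
        hfar _ (by simpa using h0) (by simpa [add_comm] using h1)⟩
  exact ⟨z, hzc, hza, fun i => by simpa using hz (i - t)⟩

structure IsNonplanarDwheel (G : SimpleGraph V) (v w : ZMod 5 → V) : Prop where
  wheel₁ : IsFullWheel G (w (-1)) v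
  wheel₂ : IsFullWheel G (v 1) w
  shared : v 2 = w (-2)
  adj : G.Adj (v 0) (w 0)

namespace IsNonplanarDwheel

variable {v w : ZMod 5 → V}

theorem symm (D : IsNonplanarDwheel G v w) :
    IsNonplanarDwheel G (fun i => w (-i)) (fun i => v (-i)) where
  wheel₁ := by simpa using D.wheel₂.comp_neg
  wheel₂ := D.wheel₁.comp_neg
  shared := by simpa using D.shared.symm
  adj := by simpa using D.adj.symm

theorem exists_adj_wheel₁ (h5 : FiveLarge G) (hext : ExtFiveWheelCond G)
    (D : IsNonplanarDwheel G v w) :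
    ∃ z, G.Adj z (w 4) ∧ G.Adj z (w 2) ∧ ∀ i, G.Adj z (v i) := by
  have hW1 : IsFullWheel G (w 4) v := D.wheel₁
  have hW2 := D.wheel₂
  have hv2 : v 2 = w 3 := D.shared
  have hfar : ∀ i u, G.Adj u (w 2) → G.Adj u (w 4) → v i ≠ u → ¬G.Adj (v i) u →
      ¬G.Adj (w 2) (v i) := fun i u hu2 hu4 hne hnadj h =>
    (hW2.rim_not_adj 2 4) <| h5.adj_of_cycle (hW2.rim_ne 2 4) hne h (hW1.center_adj_s2 i).symm
      hu4.symm hu2 hnadj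
  have hw3 : G.Adj (w 3) (w 2) := (hW2.rim_adj 2 3).symm
  refine hext.exists_adj_of_adj_rim_succ hW1.1 1 (hW2.center_adj_s2 2).symm (hv2 ▸ hw3.symm)
    (hW2.rim_not_adj 2 4) fun i h1 h2 => ?_
  obtain rfl | rfl | rfl : i = 0 ∨ i = 3 ∨ i = 4 := by revert i; decide
  · exact hfar 0 (w 3) hw3 (hW2.rim_adj 3 4) (hv2 ▸ hW1.rim_ne 0 2) (hv2 ▸ hW1.rim_not_adj 0 2)
  · exact hfar 3 (v 1) (hW2.center_adj_s2 2) (hW1.center_adj_s2 1).symm (hW1.rim_ne 3 1)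
      (hW1.rim_not_adj 3 1)
  · exact hfar 4 (w 3) hw3 (hW2.rim_adj 3 4) (hv2 ▸ hW1.rim_ne 4 2) (hv2 ▸ hW1.rim_not_adj 4 2)

theorem exists_adj_wheel₂ (h5 : FiveLarge G) (hext : ExtFiveWheelCond G)
    (D : IsNonplanarDwheel G v w) :
    ∃ z, G.Adj z (v 1) ∧ G.Adj z (v 3) ∧ ∀ i, G.Adj z (w i) := by
  obtain ⟨z, hz1, hz3, hzw⟩ := D.symm.exists_adj_wheel₁ h5 hext
  exact ⟨z, hz1, hz3, fun i => by simpa using hzw (-i)⟩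

theorem adj_w_of_adj_w_zero (h5 : FiveLarge G) (D : IsNonplanarDwheel G v w) {z : V}
    (hz4 : G.Adj z (w 4)) (hz2 : G.Adj z (w 2)) (hzv : ∀ i, G.Adj z (v i))
    (hz0 : G.Adj z (w 0)) : ∀ i, G.Adj z (w i) := by
  have hW2 := D.wheel₂
  have hz1 : G.Adj z (w 1) :=
    h5.adj_of_cycle (fun h => (hW2.rim_not_adj 1 4) (h ▸ hz4)) (hW2.rim_ne 0 2) hz0
      (hW2.rim_adj 0 1) (hW2.rim_adj 1 2) hz2.symm (hW2.rim_not_adj 0 2)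
  intro i
  obtain rfl | rfl | rfl | rfl | rfl : i = 0 ∨ i = 1 ∨ i = 2 ∨ i = 3 ∨ i = 4 := by revert i; decide
  exacts [hz0, hz1, hz2, D.shared ▸ hzv 2, hz4]

theorem adj_v_of_adj_v_zero (h5 : FiveLarge G) (D : IsNonplanarDwheel G v w) {z : V}
    (hz1 : G.Adj z (v 1)) (hz3 : G.Adj z (v 3)) (hzw : ∀ i, G.Adj z (w i))
    (hz0 : G.Adj z (v 0)) (i : ZMod 5) : G.Adj z (v i) := by
  simpa using D.symm.adj_w_of_adj_w_zero h5 hz1 hz3 (fun i => hzw (-i)) hz0 (-i)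

theorem adj_w_zero_or_adj_v_zero (h5 : FiveLarge G) (D : IsNonplanarDwheel G v w) {z z' : V}
    (hz2 : G.Adj z (w 2)) (hzv : ∀ i, G.Adj z (v i)) (hz'1 : G.Adj z' (v 1))
    (hz'3 : G.Adj z' (v 3)) (hz'w : ∀ i, G.Adj z' (w i)) :
    G.Adj z (w 0) ∨ G.Adj z' (v 0) := by
  have hW1 := D.wheel₁
  have hW2 := D.wheel₂
  by_cases hzz' : z = z'
  · exact .inl (hzz' ▸ hz'w 0)
  have hadj : G.Adj z z' := h5.adj_of_cycle hzz' (hW1.rim_ne 1 3) (hzv 1) hz'1.symm hz'3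
    (hzv 3).symm (hW1.rim_not_adj 1 3)
  by_cases hz'0 : G.Adj z' (v 0)
  · exact .inr hz'0
  have hzw0 : z ≠ w 0 := fun h => (hW2.rim_not_adj 0 2) (h ▸ hz2)
  have hz'v0 : z' ≠ v 0 := fun h => (hW1.rim_not_adj 0 3) (h ▸ hz'3)
  exact .inl (h5.adj_of_cycle hzw0 hz'v0 hadj (hz'w 0) D.adj.symm (hzv 0).symm hz'0)

end IsNonplanarDwheel

end Dwheel

theorem nonplanar_five_five_dwheel_in_ball_general {V : Type*} (G : SimpleGraph V)
    (h5 : FiveLarge G) (hext : ExtFiveWheelCond G)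
    (v w : ZMod 5 → V)
    (hW1 : IsFullWheel G (w (-1)) v) (hW2 : IsFullWheel G (v 1) w)
    (hshare : v 2 = w (-2)) (hadj : G.Adj (v 0) (w 0)) :
    ∃ z : V, (∀ i, z = v i ∨ G.Adj z (v i)) ∧ (∀ i, z = w i ∨ G.Adj z (w i)) := by
  have D : IsNonplanarDwheel G v w := ⟨hW1, hW2, hshare, hadj⟩
  obtain ⟨z, hz4, hz2, hzv⟩ := D.exists_adj_wheel₁ h5 hext
  obtain ⟨z', hz'1, hz'3, hz'w⟩ := D.exists_adj_wheel₂ h5 hext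
  rcases D.adj_w_zero_or_adj_v_zero h5 hz2 hzv hz'1 hz'3 hz'w with hz0 | hz'0
  · exact ⟨z, fun i => .inr (hzv i), fun i => .inr (D.adj_w_of_adj_w_zero h5 hz4 hz2 hzv hz0 i)⟩
  · exact ⟨z', fun i => .inr (D.adj_v_of_adj_v_zero h5 hz'1 hz'3 hz'w hz'0 i),
      fun i => .inr (hz'w i)⟩

/-- In a 5-large flag complex satisfying the extended-5-wheel condition,
every nonplanar (5,5)-dwheel with full wheels lies in a 1-ball. -/
theorem nonplanar_five_five_dwheel_in_ball {V : Type*} (G : SimpleGraph V)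
    (h5 : FiveLarge G) (hext : ExtFiveWheelCond G)
    (v w : ZMod 5 → V)
    (hW1 : IsFullWheel G (w (-1)) v) (hW2 : IsFullWheel G (v 1) w)
    (hshare : v 2 = w (-2)) (hne : v 0 ≠ w 0) (hadj : G.Adj (v 0) (w 0)) :
    ∃ z : V, (∀ i, z = v i ∨ G.Adj z (v i)) ∧ (∀ i, z = w i ∨ G.Adj z (w i)) :=
  nonplanar_five_five_dwheel_in_ball_general G h5 hext v w hW1 hW2 hshare hadj
end

section
/- In a 7-located simplicial disc, any two distinct wheels W_1, W_2 with boundary lengths both less than 6 intersect only along their boundaries: W_1 ∩ W_2 ⊆ ∂W_1 ∩ ∂W_2. -/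
open Geometry

/-- Points of the Euclidean plane, in which triangulated discs are realized. -/
abbrev Pt := EuclideanSpace ℝ (Fin 2)

noncomputable instance : DecidableEq Pt := Classical.decEq _

/-- The 1-skeleton graph of a simplicial complex. -/
def skel (K : SimplicialComplex ℝ Pt) : SimpleGraph Pt where
  Adj u v := u ≠ v ∧ ({u, v} : Finset Pt) ∈ K.faces
  symm := ⟨fun u v ⟨h, hf⟩ => ⟨h.symm, by rwa [Finset.pair_comm]⟩⟩
  loopless := ⟨fun u ⟨h, _⟩ => h rfl⟩

/-- A triangulated disc: a finite simplicial complex in the plane whose underlying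
space is the closed unit disc, which is pure of dimension 2. -/
def IsTriangulatedDisc (K : SimplicialComplex ℝ Pt) : Prop :=
  K.faces.Finite ∧ K.space = Metric.closedBall (0 : Pt) 1 ∧
  (∀ s ∈ K.faces, s.card ≤ 3) ∧
  ∀ s ∈ K.faces, ∃ t ∈ K.faces, s ⊆ t ∧ t.card = 3

/-- A vertex of the disc not lying on the boundary circle. -/
def IsInteriorVertex (K : SimplicialComplex ℝ Pt) (v : Pt) : Prop :=
  v ∈ K.vertices ∧ v ∈ Metric.ball (0 : Pt) 1

/-- The degree of a vertex: the number of edges containing it. -/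
noncomputable def vdeg (K : SimplicialComplex ℝ Pt) (v : Pt) : ℕ :=
  {s ∈ K.faces | s.card = 2 ∧ v ∈ s}.ncard

/-- Flagness: every nonempty finite set of pairwise adjacent vertices spans a face. -/
def IsFlag (K : SimplicialComplex ℝ Pt) : Prop :=
  ∀ s : Finset Pt, s.Nonempty → ↑s ⊆ K.vertices →
    (↑s : Set Pt).Pairwise (skel K).Adj → s ∈ K.faces

/-- The number of triangles of the complex. -/
noncomputable def numTri (K : SimplicialComplex ℝ Pt) : ℕ :=
  {s ∈ K.faces | s.card = 3}.ncard

/-- The number of boundary edges (edges on the boundary circle). -/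
noncomputable def bdryLen (K : SimplicialComplex ℝ Pt) : ℕ :=
  {s ∈ K.faces | s.card = 2 ∧ ↑s ⊆ Metric.sphere (0 : Pt) 1}.ncard

/-!
Realised in the plane, consecutive triangles of a wheel around its centre `c` cannot overlap, so
they all turn the same way around `c` and wind around it: every face containing `c` lies in one
of them. Hence the rim of a wheel is the whole link of its centre, and by flagness the wheel is
full. Two wheels with the same centre therefore have the same rim. If the centre `c₁` of one small
wheel lay on the rim of another, the two would form a planar dwheel of boundary length
`k₁ + k₂ - 4 ≤ 6`; by 7-location it lies in the link of a vertex `z`, a neighbour of `c₁` off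
its rim.
-/

namespace ZMod

variable {k : ℕ}

lemma forall_of_add_one [NeZero k] {P : ZMod k → Prop} {i₀ : ZMod k} (h₀ : P i₀)
    (h : ∀ i, P i → P (i + 1)) (i : ZMod k) : P i := by
  have hn : ∀ n : ℕ, P (i₀ + n) := by
    intro n
    induction n with
    | zero => simpa using h₀
    | succ n ih => simpa [add_assoc] using h _ ih
  simpa using hn (i - i₀).val

lemma forall_pos_or_forall_neg_of_mul_pos [NeZero k] {f : ZMod k → ℝ}
    (h : ∀ i, 0 < f i * f (i + 1)) : (∀ i, 0 < f i) ∨ ∀ i, f i < 0 := by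
  rcases (left_ne_zero_of_mul (h 0).ne').lt_or_gt with h0 | h0
  · exact .inr (forall_of_add_one h0 fun i hi => (neg_iff_neg_of_mul_pos (h i)).1 hi)
  · exact .inl (forall_of_add_one h0 fun i hi => (pos_iff_pos_of_mul_pos (h i)).1 hi)

lemma exists_add_one_le [NeZero k] (f : ZMod k → ℝ) : ∃ i, f (i + 1) ≤ f i := by
  by_contra! h
  have hshift : ∑ i, f (i + 1) = ∑ i, f i :=
    Fintype.sum_equiv (Equiv.addRight 1) _ _ fun _ => rfl
  have := Finset.sum_lt_sum_of_nonempty Finset.univ_nonempty fun i _ => h i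
  linarith

lemma natCast_ne_zero_of_lt {n : ℕ} (h0 : 0 < n) (hn : n < k) : (n : ZMod k) ≠ 0 := by
  rw [Ne, natCast_eq_zero_iff]
  exact fun h => (Nat.le_of_dvd h0 h).not_gt hn

lemma add_one_ne_self (hk : 2 ≤ k) (i : ZMod k) : i + 1 ≠ i := fun h =>
  natCast_ne_zero_of_lt (k := k) (n := 1) one_pos (by omega) (by simpa using h)

lemma sub_one_ne_self (hk : 2 ≤ k) (i : ZMod k) : i - 1 ≠ i := fun h =>
  add_one_ne_self hk (i - 1) (by rw [sub_add_cancel]; exact h.symm)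

lemma add_one_add_one_ne_self (hk : 3 ≤ k) (i : ZMod k) : i + 1 + 1 ≠ i := fun h =>
  natCast_ne_zero_of_lt (k := k) (n := 2) two_pos (by omega)
    (by simpa [add_assoc, one_add_one_eq_two] using h)

end ZMod

lemma add_smul_sub_add_smul_sub_mem_convexHull {E : Type*} [AddCommGroup E] [Module ℝ E]
    {c a b : E} {α β : ℝ} (hα : 0 ≤ α) (hβ : 0 ≤ β) (hαβ : α + β ≤ 1) :
    c + α • (a - c) + β • (b - c) ∈ convexHull ℝ ({c, a, b} : Set E) := by
  have := (convex_convexHull ℝ ({c, a, b} : Set E)).sum_mem (t := Finset.univ)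
    (w := ![1 - α - β, α, β]) (z := ![c, a, b])
    (by intro i _; fin_cases i <;> simp <;> linarith)
    (by simp only [Fin.sum_univ_three, Matrix.cons_val]; ring)
    (by intro i _; fin_cases i <;> exact subset_convexHull ℝ _ (by simp))
  convert this using 1
  simp only [Fin.sum_univ_three, Matrix.cons_val]
  module

namespace Geometry.SimplicialComplex

variable {E : Type*} [AddCommGroup E] [Module ℝ E] [DecidableEq E] {K : SimplicialComplex ℝ E}

lemma subset_of_sum_smul_mem_convexHull {s t : Finset E} (hs : s ∈ K.faces)
    (ht : t ∈ K.faces) {w : E → ℝ} (hw₀ : ∀ x ∈ s, 0 < w x) (hw₁ : ∑ x ∈ s, w x = 1)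
    (hp : ∑ x ∈ s, w x • x ∈ convexHull ℝ (t : Set E)) : s ⊆ t := by
  have hst : ∑ x ∈ s, w x • x ∈ convexHull ℝ ((s ∩ t : Finset E) : Set E) := by
    rw [Finset.coe_inter]
    exact K.inter_subset_convexHull hs ht
      ⟨(convex_convexHull ℝ _).sum_mem (fun x hx => (hw₀ x hx).le) hw₁
        fun x hx => subset_convexHull ℝ _ hx, hp⟩
  obtain ⟨w', -, hw'₁, hw'p⟩ := Finset.mem_convexHull'.1 hst
  have hw := (K.indep hs).eq_of_sum_eq_sum_subtype (w₁ := w)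
    (w₂ := fun x => if x ∈ t then w' x else 0) (by rw [hw₁, Finset.sum_ite_mem, hw'₁])
    (by simp only [ite_smul, zero_smul]; rw [Finset.sum_ite_mem, hw'p])
  intro x hx
  by_contra hxt
  simpa [hxt] using ((hw₀ x hx).trans_eq (hw x hx)).ne'

lemma triple_subset_of_add_smul_sub_mem_convexHull {c a b : E} {t : Finset E}
    (hs : ({c, a, b} : Finset E) ∈ K.faces) (ht : t ∈ K.faces) (hca : c ≠ a) (hcb : c ≠ b)
    (hab : a ≠ b) {α β : ℝ} (hα : 0 < α) (hβ : 0 < β) (hαβ : α + β < 1)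
    (hp : c + α • (a - c) + β • (b - c) ∈ convexHull ℝ (t : Set E)) :
    ({c, a, b} : Finset E) ⊆ t := by
  refine subset_of_sum_smul_mem_convexHull hs ht
    (w := fun x => if x = a then α else if x = b then β else 1 - α - β) ?_ ?_ ?_
  · simp only [Finset.mem_insert, Finset.mem_singleton, forall_eq_or_imp, forall_eq, hca, hcb,
      hab.symm, ↓reduceIte, hα, hβ, and_true]
    linarith
  · rw [Finset.sum_insert (by simp [hca, hcb]), Finset.sum_pair hab]
    simp [hca, hcb, hab.symm]
  · rw [Finset.sum_insert (by simp [hca, hcb]), Finset.sum_pair hab]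
    simp only [hca, hcb, hab.symm, ↓reduceIte]
    convert hp using 1
    module

lemma eq_zero_of_smul_sub_add_smul_sub_eq_zero {c a b : E}
    (hs : ({c, a, b} : Finset E) ∈ K.faces) (hca : c ≠ a) (hcb : c ≠ b) (hab : a ≠ b)
    {α β : ℝ} (h : α • (a - c) + β • (b - c) = 0) : α = 0 ∧ β = 0 := by
  have := (K.indep hs).eq_zero_of_sum_eq_zero_subtype
    (w := fun x => if x = a then α else if x = b then β else -(α + β))
    (by rw [Finset.sum_insert (by simp [hca, hcb]), Finset.sum_pair hab]
        simp [hca, hcb, hab.symm])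
    (by rw [Finset.sum_insert (by simp [hca, hcb]), Finset.sum_pair hab]
        simp only [hca, hcb, hab.symm, ↓reduceIte]
        rw [← h]
        module)
  exact ⟨by simpa using this a (by simp), by simpa [hab.symm] using this b (by simp)⟩

end Geometry.SimplicialComplex

def cross (x y : Pt) : ℝ := x 0 * y 1 - x 1 * y 0

lemma cross_swap (x y : Pt) : cross y x = -cross x y := by
  unfold cross; ring

lemma cross_smul_eq (x y v : Pt) : cross x y • v = cross v y • x + cross x v • y := by
  ext i; fin_cases i <;> simp [cross] <;> ring

lemma cross_sub_ne_zero {K : SimplicialComplex ℝ Pt} {c a b : Pt}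
    (hs : ({c, a, b} : Finset Pt) ∈ K.faces) (hca : c ≠ a) (hcb : c ≠ b) (hab : a ≠ b) :
    cross (a - c) (b - c) ≠ 0 := by
  intro h
  set x := a - c
  set y := b - c
  have h₀ : y 0 • x + (-x 0) • y = 0 := by
    ext i; fin_cases i <;> simp [cross] at h ⊢ <;> linarith
  have h₁ : y 1 • x + (-x 1) • y = 0 := by
    ext i; fin_cases i <;> simp [cross] at h ⊢ <;> linarith
  obtain ⟨-, hx₀⟩ := K.eq_zero_of_smul_sub_add_smul_sub_eq_zero hs hca hcb hab h₀
  obtain ⟨-, hx₁⟩ := K.eq_zero_of_smul_sub_add_smul_sub_eq_zero hs hca hcb hab h₁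
  have hx : x = 0 := by
    ext i; fin_cases i <;> simp [neg_eq_zero.1 hx₀, neg_eq_zero.1 hx₁]
  exact hca (sub_eq_zero.1 hx).symm

lemma cross_mul_cross_pos {K : SimplicialComplex ℝ Pt} {c a x b : Pt}
    (h₁ : ({c, a, x} : Finset Pt) ∈ K.faces) (h₂ : ({c, x, b} : Finset Pt) ∈ K.faces)
    (hca : c ≠ a) (hcx : c ≠ x) (hcb : c ≠ b) (hax : a ≠ x) (hxb : x ≠ b) (hab : a ≠ b) :
    0 < cross (a - c) (x - c) * cross (x - c) (b - c) := by
  have hD₁ := cross_sub_ne_zero h₁ hca hcx hax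
  have hD₂ := cross_sub_ne_zero h₂ hcx hcb hxb
  by_contra hle
  have hlt : cross (a - c) (x - c) * cross (x - c) (b - c) < 0 :=
    (not_lt.1 hle).lt_of_ne (mul_ne_zero hD₁ hD₂)
  set A := a - c
  set X := x - c
  set B := b - c
  -- Then `a` and `b` lie on the same side of the line `c x`: `B = l A + m X` with `l > 0`, and a
  -- point close to `c` lies in both open triangles.
  set l := -(cross A X * cross X B) / cross A X ^ 2
  set m := cross A B / cross A X
  have hl : 0 < l := div_pos (neg_pos.2 hlt) (by positivity)
  have hB : B = l • A + m • X := by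
    apply smul_right_injective Pt hD₁
    dsimp only
    rw [smul_add, smul_smul, smul_smul, cross_smul_eq A X B, cross_swap X B]
    congr 2
    · simp only [l]; field_simp
    · exact (mul_div_cancel₀ _ hD₁).symm
  have hS : 0 < l + 2 * |m| + 3 := by positivity
  set ε := 1 / (l + 2 * |m| + 3)
  have hε : 0 < ε := by positivity
  have hεS : ε * (l + 2 * |m| + 3) = 1 := one_div_mul_cancel hS.ne'
  have hsub := K.triple_subset_of_add_smul_sub_mem_convexHull h₁ h₂ hca hcx hax
    (α := ε * l) (β := ε * (|m| + 1)) (by positivity) (by positivity)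
    (by nlinarith [abs_nonneg m])
    (by
      rw [Finset.coe_insert, Finset.coe_pair]
      convert add_smul_sub_add_smul_sub_mem_convexHull (c := c) (a := x) (b := b)
        (α := ε * (|m| + 1 - m)) (β := ε) (by nlinarith [le_abs_self m]) hε.le
        (by nlinarith [neg_abs_le m, abs_nonneg m]) using 1
      change c + (ε * l) • A + (ε * (|m| + 1)) • X = c + (ε * (|m| + 1 - m)) • X + ε • B
      rw [hB]
      module)
  have ha : a ∈ ({c, x, b} : Finset Pt) := hsub (by simp)
  simp only [Finset.mem_insert, Finset.mem_singleton] at ha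
  rcases ha with h | h | h
  exacts [hca h.symm, hax h, hab h]

lemma exists_cross_nonneg_of_cross_pos {k : ℕ} [NeZero k] (z : ZMod k → Pt)
    (hz : ∀ i, 0 < cross (z i) (z (i + 1))) (v : Pt) :
    ∃ i, 0 ≤ cross (z i) v ∧ 0 ≤ cross v (z (i + 1)) := by
  by_contra! h
  have hstep : ∀ i, 0 ≤ cross (z i) v → 0 < cross (z (i + 1)) v := fun i hi => by
    linarith [cross_swap v (z (i + 1)), h i hi]
  have hsign : ∀ i, 0 < cross (z i) v * cross (z (i + 1)) v := by
    by_cases h₀ : ∃ i₀, 0 ≤ cross (z i₀) v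
    · obtain ⟨i₀, hi₀⟩ := h₀
      have hpos := ZMod.forall_of_add_one (P := fun i => 0 < cross (z i) v) (hstep i₀ hi₀)
        fun i hi => hstep i hi.le
      exact fun i => mul_pos (hpos i) (hpos (i + 1))
    · simp only [not_exists, not_le] at h₀
      exact fun i => mul_pos_of_neg_of_neg (h₀ i) (h₀ (i + 1))
  have hv : 0 < v 0 ^ 2 + v 1 ^ 2 := by
    by_contra! hv
    have h0 : v 0 = 0 := by nlinarith [sq_nonneg (v 0), sq_nonneg (v 1)]
    have h1 : v 1 = 0 := by nlinarith [sq_nonneg (v 0), sq_nonneg (v 1)]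
    simpa [cross, h0, h1] using hsign 0
  -- The cotangent of the angle from `v` to `z i` would increase strictly all around the cycle.
  obtain ⟨i, hi⟩ := ZMod.exists_add_one_le fun i => (z i 0 * v 0 + z i 1 * v 1) / cross (z i) v
  have hne : cross (z i) v ≠ 0 := left_ne_zero_of_mul (hsign i).ne'
  have hne' : cross (z (i + 1)) v ≠ 0 := right_ne_zero_of_mul (hsign i).ne'
  have key : (z (i + 1) 0 * v 0 + z (i + 1) 1 * v 1) / cross (z (i + 1)) v
      - (z i 0 * v 0 + z i 1 * v 1) / cross (z i) v
      = cross (z i) (z (i + 1)) * (v 0 ^ 2 + v 1 ^ 2) /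
        (cross (z i) v * cross (z (i + 1)) v) := by
    field_simp
    simp only [cross]
    ring
  have := div_pos (mul_pos (hz i) hv) (hsign i)
  linarith

lemma exists_mem_cone {k : ℕ} [NeZero k] (z : ZMod k → Pt)
    (hz : ∀ i, 0 < cross (z i) (z (i + 1)) * cross (z (i + 1)) (z (i + 1 + 1))) (v : Pt) :
    ∃ i, ∃ α β : ℝ, 0 ≤ α ∧ 0 ≤ β ∧ v = α • z i + β • z (i + 1) := by
  have hcone : ∀ z : ZMod k → Pt, (∀ i, 0 < cross (z i) (z (i + 1))) →
      ∃ i, ∃ α β : ℝ, 0 ≤ α ∧ 0 ≤ β ∧ v = α • z i + β • z (i + 1) := by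
    intro z hz
    obtain ⟨i, h₂, h₁⟩ := exists_cross_nonneg_of_cross_pos z hz v
    refine ⟨i, _, _, div_nonneg h₁ (hz i).le, div_nonneg h₂ (hz i).le, ?_⟩
    apply smul_right_injective Pt (hz i).ne'
    dsimp only
    rw [cross_smul_eq, smul_add, smul_smul, smul_smul, mul_div_cancel₀ _ (hz i).ne',
      mul_div_cancel₀ _ (hz i).ne']
  rcases ZMod.forall_pos_or_forall_neg_of_mul_pos hz with hpos | hneg
  · exact hcone z hpos
  · obtain ⟨i, α, β, hα, hβ, hv⟩ := hcone (fun i => z (-i)) fun i => by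
      have := hneg (-i - 1)
      rw [sub_add_cancel] at this
      show 0 < cross (z (-i)) (z (-(i + 1)))
      rw [cross_swap, show -(i + 1) = -i - 1 by ring]
      linarith
    refine ⟨-i - 1, β, α, hβ, hα, ?_⟩
    rw [hv, sub_add_cancel, neg_add, add_comm]
    abel_nf

section Wheel

variable {K : SimplicialComplex ℝ Pt} {k : ℕ} {c : Pt} {r : ZMod k → Pt}

lemma exists_subset_wheel_triangle (hk : 3 ≤ k) (hW : IsWheel (skel K) c r)
    (hf : ∀ i, ({c, r i, r (i + 1)} : Finset Pt) ∈ K.faces) {s : Finset Pt}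
    (hs : s ∈ K.faces) (hcs : c ∈ s) : ∃ i, s ⊆ {c, r i, r (i + 1)} := by
  have : NeZero k := ⟨by omega⟩
  obtain ⟨i, α, β, hα, hβ, hv⟩ := exists_mem_cone (fun i => r i - c)
    (fun i => cross_mul_cross_pos (hf i) (hf (i + 1)) (hW.2.1 i) (hW.2.1 (i + 1))
      (hW.2.1 (i + 1 + 1)) (hW.1.ne (ZMod.add_one_ne_self (by omega) i).symm)
      (hW.1.ne (ZMod.add_one_ne_self (by omega) (i + 1)).symm)
      (hW.1.ne (ZMod.add_one_add_one_ne_self hk i).symm))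
    (∑ x ∈ s, (x - c))
  -- A point of the open simplex `s` close to `c`, which lies in the `i`-th triangle.
  set n : ℝ := (s.card : ℝ)
  have hn : 0 ≤ n := Nat.cast_nonneg _
  set ε := 1 / (n + α + β + 1)
  have hε : 0 < ε := by positivity
  have hεS : ε * (n + α + β + 1) = 1 := one_div_mul_cancel (by positivity)
  refine ⟨i, K.subset_of_sum_smul_mem_convexHull hs (hf i)
    (w := fun x => ε + if x = c then 1 - n * ε else 0) ?_ ?_ ?_⟩
  · intro x _
    split_ifs <;> nlinarith
  · rw [Finset.sum_add_distrib, Finset.sum_const, Finset.sum_ite_eq' s c, if_pos hcs]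
    simp only [nsmul_eq_mul, n]
    ring
  · have hsum : ∑ x ∈ s, (ε + if x = c then 1 - n * ε else 0) • x
        = c + ε • ∑ x ∈ s, (x - c) := by
      simp only [add_smul, ite_smul, zero_smul, Finset.sum_add_distrib, Finset.sum_ite_eq' s c,
        if_pos hcs, Finset.sum_sub_distrib, Finset.sum_const, n]
      rw [← Finset.smul_sum, ← Nat.cast_smul_eq_nsmul ℝ]
      module
    rw [hsum, hv, Finset.coe_insert, Finset.coe_pair]
    convert add_smul_sub_add_smul_sub_mem_convexHull (c := c) (a := r i) (b := r (i + 1))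
      (α := ε * α) (β := ε * β) (by positivity) (by positivity) (by nlinarith) using 1
    module

lemma mem_range_of_adj (hk : 3 ≤ k) (hW : IsWheel (skel K) c r)
    (hf : ∀ i, ({c, r i, r (i + 1)} : Finset Pt) ∈ K.faces) {y : Pt} (hy : (skel K).Adj c y) :
    y ∈ Set.range r := by
  obtain ⟨i, hi⟩ := exists_subset_wheel_triangle hk hW hf hy.2 (by simp)
  have hy' : y ∈ ({c, r i, r (i + 1)} : Finset Pt) := hi (by simp)
  simp only [Finset.mem_insert, Finset.mem_singleton] at hy'
  rcases hy' with h | h | h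
  exacts [absurd h.symm hy.1, ⟨i, h.symm⟩, ⟨i + 1, h.symm⟩]

lemma range_eq_neighborSet (hk : 3 ≤ k) (hW : IsWheel (skel K) c r)
    (hf : ∀ i, ({c, r i, r (i + 1)} : Finset Pt) ∈ K.faces) :
    Set.range r = (skel K).neighborSet c :=
  (Set.range_subset_iff.2 hW.2.2.2).antisymm fun _ hy => mem_range_of_adj hk hW hf hy

lemma eq_add_one_or_eq_sub_one (hk : 3 ≤ k) (hW : IsWheel (skel K) c r)
    (hf : ∀ i, ({c, r i, r (i + 1)} : Finset Pt) ∈ K.faces) {s : Finset Pt}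
    (hs : s ∈ K.faces) (hcs : c ∈ s) {i : ZMod k} (his : r i ∈ s) {y : Pt} (hys : y ∈ s)
    (hyc : y ≠ c) (hyi : y ≠ r i) : y = r (i + 1) ∨ y = r (i - 1) := by
  obtain ⟨m, hm⟩ := exists_subset_wheel_triangle hk hW hf hs hcs
  have hi := hm his
  have hy := hm hys
  simp only [Finset.mem_insert, Finset.mem_singleton] at hi hy
  rcases hi with h | h | h
  · exact absurd h.symm (hW.2.1 i)
  · obtain rfl := hW.1 h
    rcases hy with hy | hy | hy
    exacts [absurd hy hyc, absurd hy hyi, .inl hy]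
  · obtain rfl := hW.1 h
    rcases hy with hy | hy | hy
    exacts [absurd hy hyc, .inr (by rwa [add_sub_cancel_right]), absurd hy hyi]

lemma isFullWheel_of_isFlag (hflag : IsFlag K) (hk : 3 ≤ k) (hW : IsWheel (skel K) c r)
    (hf : ∀ i, ({c, r i, r (i + 1)} : Finset Pt) ∈ K.faces) : IsFullWheel (skel K) c r := by
  refine ⟨hW, fun i j hij => ?_⟩
  have hface : ({c, r i, r j} : Finset Pt) ∈ K.faces := by
    refine hflag _ (by simp) ?_ ?_
    · have hv : ∀ {t : Finset Pt} {x : Pt}, t ∈ K.faces → x ∈ t → x ∈ K.vertices :=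
        fun ht hx => K.vertices_eq ▸ Set.mem_biUnion ht hx
      simp only [Finset.coe_insert, Finset.coe_singleton, Set.insert_subset_iff,
        Set.singleton_subset_iff]
      exact ⟨hv (hf i) (by simp), hv (hf i) (by simp), hv (hf j) (by simp)⟩
    · simp [hW.2.2.2, hij]
  rcases eq_add_one_or_eq_sub_one hk hW hf hface (by simp) (by simp) (by simp)
    (hW.2.1 j).symm hij.ne' with h | h
  · exact .inl (hW.1 h)
  · exact .inr (by rw [hW.1 h, sub_add_cancel])

end Wheel

lemma IsFullWheel.comp_add_mul {V : Type*} {G : SimpleGraph V} {k : ℕ} {c : V}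
    {r : ZMod k → V} (h : IsFullWheel G c r) (a : ZMod k) {ε : ZMod k}
    (hε : ε = 1 ∨ ε = -1) : IsFullWheel G c (fun i => r (a + ε * i)) := by
  obtain ⟨⟨hinj, hc, hadj, hspoke⟩, hfull⟩ := h
  have hεε : ε * ε = 1 := by rcases hε with rfl | rfl <;> ring
  refine ⟨⟨fun i j hij => ?_, fun i => hc _, fun i => ?_, fun i => hspoke _⟩,
    fun i j hij => ?_⟩
  · linear_combination ε * hinj hij - (i - j) * hεε
  · rcases hε with rfl | rfl
    · simpa [mul_add, add_assoc] using hadj (a + 1 * i)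
    · have := hadj (a + -1 * (i + 1))
      rw [show a + -1 * (i + 1) + 1 = a + -1 * i by ring] at this
      exact this.symm
  · rcases hε with rfl | rfl <;> rcases hfull _ _ hij with h | h
    · left; linear_combination h
    · right; linear_combination h
    · right; linear_combination h
    · left; linear_combination h

lemma MLocated.exists_adj_notMem_range {V : Type*} {G : SimpleGraph V} (h7 : MLocated G 7)
    {k₁ k₂ : ℕ} (hk₁ : 4 ≤ k₁) (hk₂ : 4 ≤ k₂) (hk : k₁ + k₂ ≤ 11) {c₁ c₂ : V}
    {r₁ : ZMod k₁ → V} {r₂ : ZMod k₂ → V} (hW₁ : IsFullWheel G c₁ r₁)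
    (hW₂ : IsFullWheel G c₂ r₂) {i₀ : ZMod k₁} {j : ZMod k₂} (hi₀ : r₁ i₀ = c₂)
    (hj : r₂ j = c₁) {ε : ZMod k₁} (hε : ε = 1 ∨ ε = -1) (hprev : r₁ (i₀ + ε) = r₂ (j - 1))
    (hnext : r₁ (i₀ - ε) = r₂ (j + 1)) : ∃ z, G.Adj c₁ z ∧ z ∉ Set.range r₁ := by
  have hεε : ε * ε = 1 := by rcases hε with rfl | rfl <;> ring
  -- Re-indexed rims making the two wheels the planar dwheel of `MLocated`.
  set v : ZMod k₁ → V := fun i => r₁ (i₀ - ε + ε * i) with hv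
  set w : ZMod k₂ → V := fun i => r₂ (j + 1 + 1 * i) with hw
  have hwc : w (-1) = c₁ := by rw [← hj, hw]; ring_nf
  have hv₁ : v 1 = c₂ := by rw [← hi₀, hv]; ring_nf
  have hvw₂ : v 2 = w (-2) := by
    rw [hv, hw]; dsimp only; rw [show i₀ - ε + ε * 2 = i₀ + ε by ring, hprev]; ring_nf
  have hvw₀ : v 0 = w 0 := by
    rw [hv, hw]; dsimp only; rw [mul_zero, add_zero, hnext]; ring_nf
  obtain ⟨z, hzv, hzw⟩ := h7 k₁ k₂ hk₁ hk₂ v w (hwc ▸ hW₁.comp_add_mul _ hε)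
    (hv₁ ▸ hW₂.comp_add_mul _ (.inl rfl)) hvw₂ (.inl ⟨hvw₀, by omega⟩)
  refine ⟨z, hwc ▸ (hzw (-1)).symm, ?_⟩
  rintro ⟨m, rfl⟩
  have hvm : v (ε * (m - i₀) + 1) = r₁ m := by
    rw [hv]; dsimp only; congr 1; linear_combination (m - i₀) * hεε
  exact G.loopless.irrefl _ (hvm ▸ hzv (ε * (m - i₀) + 1))

lemma center_notMem_range {K : SimplicialComplex ℝ Pt} (hflag : IsFlag K)
    (h7 : MLocated (skel K) 7) {k₁ k₂ : ℕ} (hk₁ : 4 ≤ k₁) (hk₂ : 4 ≤ k₂) (hk : k₁ + k₂ ≤ 11)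
    {c₁ c₂ : Pt} {r₁ : ZMod k₁ → Pt} {r₂ : ZMod k₂ → Pt}
    (hW₁ : IsWheel (skel K) c₁ r₁) (hW₂ : IsWheel (skel K) c₂ r₂)
    (hf₁ : ∀ i, ({c₁, r₁ i, r₁ (i + 1)} : Finset Pt) ∈ K.faces)
    (hf₂ : ∀ i, ({c₂, r₂ i, r₂ (i + 1)} : Finset Pt) ∈ K.faces) :
    c₁ ∉ Set.range r₂ := by
  rintro ⟨j, hj⟩
  obtain ⟨i₀, hi₀⟩ := mem_range_of_adj (by omega) hW₁ hf₁ (hj ▸ (hW₂.2.2.2 j).symm)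
  -- The triangles of the second wheel on the edge `c₂ c₁` lie in the link of `c₁`, so their
  -- third vertices `r₂ (j ∓ 1)` are the rim neighbours of `c₂ = r₁ i₀`.
  have hprev := eq_add_one_or_eq_sub_one (by omega) hW₁ hf₁ (hf₂ (j - 1)) (by simp [← hj])
    (by simp [hi₀]) (y := r₂ (j - 1)) (by simp)
    (by rw [← hj]; exact hW₂.1.ne (ZMod.sub_one_ne_self (by omega) j))
    (hi₀ ▸ (hW₂.2.1 _).symm)
  have hnext := eq_add_one_or_eq_sub_one (by omega) hW₁ hf₁ (hf₂ j) (by simp [← hj])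
    (by simp [hi₀]) (y := r₂ (j + 1)) (by simp)
    (by rw [← hj]; exact hW₂.1.ne (ZMod.add_one_ne_self (by omega) j))
    (hi₀ ▸ (hW₂.2.1 _).symm)
  have hne : r₂ (j - 1) ≠ r₂ (j + 1) := hW₂.1.ne fun h =>
    ZMod.add_one_add_one_ne_self (by omega) (j - 1) (by linear_combination -h)
  obtain ⟨ε, hε, h₁, h₂⟩ : ∃ ε : ZMod k₁, (ε = 1 ∨ ε = -1) ∧
      r₁ (i₀ + ε) = r₂ (j - 1) ∧ r₁ (i₀ - ε) = r₂ (j + 1) := by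
    rcases hprev with hp | hp <;> rcases hnext with hn | hn
    · exact absurd (hp.trans hn.symm) hne
    · exact ⟨1, .inl rfl, hp.symm, hn.symm⟩
    · exact ⟨-1, .inr rfl, by rwa [← sub_eq_add_neg, eq_comm],
        by rwa [sub_neg_eq_add, eq_comm]⟩
    · exact absurd (hp.trans hn.symm) hne
  obtain ⟨z, hz, hzr⟩ := h7.exists_adj_notMem_range hk₁ hk₂ hk
    (isFullWheel_of_isFlag hflag (by omega) hW₁ hf₁)
    (isFullWheel_of_isFlag hflag (by omega) hW₂ hf₂)
    hi₀ hj hε h₁ h₂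
  exact hzr (mem_range_of_adj (by omega) hW₁ hf₁ hz)

theorem small_wheels_meet_along_boundaries_general (K : Geometry.SimplicialComplex ℝ Pt)
    (hflag : IsFlag K) (h7 : MLocated (skel K) 7)
    {k1 k2 : ℕ} (hk1 : 4 ≤ k1) (hk1' : k1 < 6) (hk2 : 4 ≤ k2) (hk2' : k2 < 6)
    (c1 : Pt) (r1 : ZMod k1 → Pt) (c2 : Pt) (r2 : ZMod k2 → Pt)
    (hW1 : IsWheel (skel K) c1 r1) (hW2 : IsWheel (skel K) c2 r2)
    (hW1f : ∀ i, ({c1, r1 i, r1 (i + 1)} : Finset Pt) ∈ K.faces)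
    (hW2f : ∀ i, ({c2, r2 i, r2 (i + 1)} : Finset Pt) ∈ K.faces)
    (hdist : ¬ (c1 = c2 ∧ Set.range r1 = Set.range r2)) :
    ({c1} ∪ Set.range r1) ∩ ({c2} ∪ Set.range r2) ⊆ Set.range r1 ∩ Set.range r2 := by
  have hc : c1 ≠ c2 := fun h => hdist ⟨h, by
    rw [range_eq_neighborSet (by omega) hW1 hW1f, range_eq_neighborSet (by omega) hW2 hW2f, h]⟩
  have h12 := center_notMem_range hflag h7 hk1 hk2 (by omega) hW1 hW2 hW1f hW2f
  have h21 := center_notMem_range hflag h7 hk2 hk1 (by omega) hW2 hW1 hW2f hW1f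
  rintro x ⟨hx1 | hx1, hx2 | hx2⟩
  · exact absurd ((Set.mem_singleton_iff.1 hx1).symm.trans hx2) hc
  · exact absurd (Set.mem_singleton_iff.1 hx1 ▸ hx2) h12
  · exact absurd (Set.mem_singleton_iff.1 hx2 ▸ hx1) h21
  · exact ⟨hx1, hx2⟩

/-- In a 7-located simplicial disc, distinct wheels of boundary length
less than 6 intersect only along their boundaries (rims). -/
theorem small_wheels_meet_along_boundaries (K : Geometry.SimplicialComplex ℝ Pt)
    (hD : IsTriangulatedDisc K) (hflag : IsFlag K) (h7 : MLocated (skel K) 7)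
    {k1 k2 : ℕ} (hk1 : 4 ≤ k1) (hk1' : k1 < 6) (hk2 : 4 ≤ k2) (hk2' : k2 < 6)
    (c1 : Pt) (r1 : ZMod k1 → Pt) (c2 : Pt) (r2 : ZMod k2 → Pt)
    (hW1 : IsWheel (skel K) c1 r1) (hW2 : IsWheel (skel K) c2 r2)
    (hW1f : ∀ i, ({c1, r1 i, r1 (i + 1)} : Finset Pt) ∈ K.faces)
    (hW2f : ∀ i, ({c2, r2 i, r2 (i + 1)} : Finset Pt) ∈ K.faces)
    (hdist : ¬ (c1 = c2 ∧ Set.range r1 = Set.range r2)) :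
    ({c1} ∪ Set.range r1) ∩ ({c2} ∪ Set.range r2) ⊆ Set.range r1 ∩ Set.range r2 :=
  small_wheels_meet_along_boundaries_general K hflag h7 hk1 hk1' hk2 hk2' c1 r1 c2 r2 hW1 hW2 hW1f
    hW2f hdist
end
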